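/- Let R be a Dedekind domain and M an R-module. If M is universally torsionless, then M is the directed union of its finitely generated projective submodules that are direct summands of M. -/

import Mathlib

open TensorProduct

/-- The natural map `M ⊗ N → Hom(M*, N)`, `m ⊗ n ↦ (w ↦ w m • n)`. -/
noncomputable def natMap (R : Type*) [CommRing R] (M : Type*) [AddCommGroup M] [Module R M]
    (N : Type*) [AddCommGroup N] [Module R N] :
    M ⊗[R] N →ₗ[R] ((M →ₗ[R] R) →ₗ[R] N) :=
  (dualTensorHom R (Module.Dual R M) N).comp (LinearMap.rTensor N (Module.Dual.eval R M))

/-!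
Testing the hypothesis on `N = R ⧸ I`, where `M ⊗ N = M ⧸ I • M`, shows that `x ∈ I • M` whenever
`w x ∈ I` for all `w : M →ₗ[R] R`. For `I = 0` this makes `M` torsion-free; for `I` the ideal of
the values `w x` it writes `x = ∑ wᵢ(x) • yᵢ`, and correcting inductively one gets such a formula
for finitely many elements at once, i.e. every finitely generated `L ≤ M` is fixed by a composite
`M → Rⁿ → M`. The saturation `L'` of `L` then embeds into `Rⁿ`, so it is finitely generated and
torsion-free, hence projective over the Dedekind domain `R`. Applying the same to `L'`, the
saturation `S` of its image in `Rⁿ` has a torsion-free, hence projective, quotient, so `Rⁿ`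
retracts onto `S`, and `M → Rⁿ → S → M` retracts `M` onto `L'`.

Test modules must lie in the universe of `M`, so `R` must be small there; this holds when `M ≠ 0`,
as `R ⧸ ann x` embeds into `M` and `R` embeds into `∏ₙ R ⧸ (ann x)ⁿ` by Krull.
-/

open scoped nonZeroDivisors

universe u v

section Small

variable {R : Type u} [CommRing R]

theorem Ideal.small_quotient_mul {I J : Ideal R} [Small.{v} (R ⧸ I)] [Small.{v} (R ⧸ J)]
    (hJ : J.FG) : Small.{v} (R ⧸ I * J) := by
  classical
  obtain ⟨s, rfl⟩ := hJ
  -- `r ≡ r₀ + ∑ dᵢ sᵢ (mod I * J)` with `r₀` determined mod `J` and the `dᵢ` mod `I`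
  let f : (R ⧸ span (s : Set R)) × (s → R ⧸ I) → R ⧸ I * span (s : Set R) :=
    fun p => Quotient.mk _ (p.1.out + ∑ i, (p.2 i).out * i)
  refine small_of_surjective (f := f) fun z => ?_
  obtain ⟨r, rfl⟩ := Quotient.mk_surjective z
  have hr : r - (Quotient.mk (span (s : Set R)) r).out ∈ span (s : Set R) := by
    rw [← Quotient.eq, Quotient.mk_out]
  obtain ⟨d, -, hd⟩ := Submodule.mem_span_finset.mp hr
  refine ⟨(Quotient.mk _ r, fun i => Quotient.mk I (d i)), Quotient.eq.mpr ?_⟩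
  show (Quotient.mk _ r).out + ∑ i : s, (Quotient.mk I (d i)).out * i - r ∈ _
  generalize (Quotient.mk (span (s : Set R)) r).out = r₀ at hd ⊢
  obtain rfl : r = r₀ + ∑ i : s, d i * i := by
    rw [Finset.sum_coe_sort s fun i => d i * i]
    simp only [← smul_eq_mul, hd, add_sub_cancel]
  rw [add_sub_add_left_eq_sub, ← Finset.sum_sub_distrib]
  refine sum_mem _ fun i _ => ?_
  rw [← sub_mul]
  exact mul_mem_mul (Quotient.eq.mp (Quotient.mk_out _)) (subset_span i.2)

theorem Ideal.small_quotient_pow [IsNoetherianRing R] {I : Ideal R} [Small.{v} (R ⧸ I)]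
    (n : ℕ) : Small.{v} (R ⧸ I ^ n) := by
  induction n with
  | zero => rw [pow_zero, one_eq_top]; infer_instance
  | succ n ih => rw [pow_succ']; exact small_quotient_mul (IsNoetherian.noetherian _)

theorem small_of_small_quotient [IsNoetherianRing R] [IsDomain R] {I : Ideal R} (hI : I ≠ ⊤)
    [Small.{v} (R ⧸ I)] : Small.{v} R := by
  have := Ideal.small_quotient_pow (I := I)
  -- Krull's intersection theorem: `R` embeds into `∏ₙ R ⧸ I ^ n`
  refine small_of_injective (f := fun r (n : ℕ) => Ideal.Quotient.mk (I ^ n) r) fun r r' h => ?_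
  have : r - r' ∈ (⊥ : Ideal R) := by
    rw [← I.iInf_pow_eq_bot_of_isDomain hI]
    exact Submodule.mem_iInf _ |>.mpr fun n => Ideal.Quotient.eq.mp (congrFun h n)
  rwa [Ideal.mem_bot, sub_eq_zero] at this

theorem small_of_nontrivial [IsNoetherianRing R] [IsDomain R] (M : Type v) [AddCommGroup M]
    [Module R M] [Nontrivial M] : Small.{v} R := by
  obtain ⟨x, hx⟩ := exists_ne (0 : M)
  have : Small.{v} (R ⧸ Ideal.torsionOf R M x) :=
    small_of_injective (Ideal.quotTorsionOfEquivSpanSingleton R M x).injective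
  exact small_of_small_quotient ((Ideal.torsionOf_eq_top_iff (R := R) x).not.mpr hx)

end Small

namespace Submodule

variable {R M : Type*} [CommRing R] [AddCommGroup M] [Module R M] {L : Submodule R M} {x : M}

def saturation (L : Submodule R M) : Submodule R M :=
  (torsion R (M ⧸ L)).comap L.mkQ

theorem mem_saturation_iff : x ∈ L.saturation ↔ ∃ a ∈ R⁰, a • x ∈ L := by
  simp [saturation, Submonoid.smul_def, ← Quotient.mk_smul, Quotient.mk_eq_zero]

theorem le_saturation (L : Submodule R M) : L ≤ L.saturation :=
  fun x hx => mem_saturation_iff.mpr ⟨1, one_mem _, by simpa using hx⟩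

theorem mem_saturation_of_smul_mem {a : R} (ha : a ∈ R⁰) (h : a • x ∈ L.saturation) :
    x ∈ L.saturation := by
  obtain ⟨b, hb, hbx⟩ := mem_saturation_iff.mp h
  exact mem_saturation_iff.mpr ⟨b * a, mul_mem hb ha, by rwa [mul_smul]⟩

instance isTorsionFree_quotient_saturation : Module.IsTorsionFree R (M ⧸ L.saturation) where
  isSMulRegular r hr := by
    rintro ⟨y⟩ ⟨z⟩ h
    simp only [Quotient.quot_mk_eq_mk, ← Quotient.mk_smul, Quotient.eq, ← smul_sub] at h ⊢
    exact mem_saturation_of_smul_mem hr.mem_nonZeroDivisors h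

variable {F : Type*} [AddCommGroup F] [Module R F]

theorem fg_saturation_of_retract [Module.IsTorsionFree R M] [IsNoetherian R F]
    (θ : M →ₗ[R] F) (π : F →ₗ[R] M) (hθπ : ∀ x ∈ L, π (θ x) = x) :
    L.saturation.FG := by
  have hker : L.saturation ⊓ LinearMap.ker θ = ⊥ := by
    refine eq_bot_iff.mpr fun x ⟨hx, hθx⟩ => ?_
    obtain ⟨a, ha, hax⟩ := mem_saturation_iff.mp hx
    have : a • x = 0 := by
      rw [← hθπ _ hax, map_smul, LinearMap.mem_ker.mp hθx, smul_zero, map_zero]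
    exact (mem_bot R).mpr
      ((isRegular_iff_mem_nonZeroDivisors.mpr ha).smul_eq_zero_iff_right.mp this)
  exact fg_of_fg_map_of_fg_inf_ker θ (IsNoetherian.noetherian _) (hker ▸ fg_bot)

end Submodule

section Dedekind

variable {R : Type*} [CommRing R] [IsDedekindDomain R]
  {M : Type*} [AddCommGroup M] [Module R M] {F : Type*} [AddCommGroup F] [Module R F]

theorem Module.projective_of_isTorsionFree [Module.Finite R F] [Module.IsTorsionFree R F] :
    Module.Projective R F :=
  have := Module.finitePresentation_of_finite R F
  Module.Flat.projective_of_finitePresentation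

theorem Submodule.exists_retraction_saturation [Module.Finite R F] (T : Submodule R F) :
    ∃ p : F →ₗ[R] T.saturation, ∀ x : T.saturation, p x = x := by
  have : Module.Projective R (F ⧸ T.saturation) := Module.projective_of_isTorsionFree
  obtain ⟨g, hg⟩ := T.saturation.mkQ.exists_rightInverse_of_surjective T.saturation.range_mkQ
  refine ⟨LinearMap.codRestrict _ (LinearMap.id - g ∘ₗ T.saturation.mkQ) fun x => ?_,
    fun x => Subtype.ext ?_⟩
  · rw [← Quotient.mk_eq_zero, LinearMap.sub_apply, Quotient.mk_sub, sub_eq_zero]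
    simpa using congr($hg (T.saturation.mkQ x)).symm
  · simp [(Quotient.mk_eq_zero _).mpr x.2]

theorem Submodule.exists_isCompl_saturation_of_retract [Module.Finite R F] (L : Submodule R M)
    (θ : M →ₗ[R] F) (π : F →ₗ[R] M) (hθπ : ∀ x ∈ L.saturation, π (θ x) = x) :
    ∃ L', IsCompl L.saturation L' := by
  obtain ⟨p, hp⟩ := (L.saturation.map θ).exists_retraction_saturation
  have hπ : ∀ v ∈ (L.saturation.map θ).saturation, π v ∈ L.saturation := by
    intro v hv
    obtain ⟨a, ha, u, hu, hav⟩ := mem_saturation_iff.mp hv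
    refine mem_saturation_of_smul_mem ha ?_
    rw [← map_smul, ← hav, hθπ u hu]
    exact hu
  let ρ : M →ₗ[R] L.saturation :=
    LinearMap.codRestrict _ (π ∘ₗ Submodule.subtype _ ∘ₗ p ∘ₗ θ) fun x =>
      hπ _ (p (θ x)).2
  refine ⟨_, LinearMap.isCompl_of_proj (f := ρ) fun x => Subtype.ext ?_⟩
  have hx : θ x ∈ (L.saturation.map θ).saturation := le_saturation _ (mem_map_of_mem x.2)
  simp [ρ, hp ⟨θ x, hx⟩, hθπ x x.2]

end Dedekind

theorem natMap_tmul {R M N : Type*} [CommRing R] [AddCommGroup M] [Module R M] [AddCommGroup N]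
    [Module R N] (x : M) (n : N) (w : Module.Dual R M) : natMap R M N (x ⊗ₜ n) w = w x • n := by
  simp [natMap]

def UniversallyTorsionless (R : Type u) [CommRing R] (M : Type v) [AddCommGroup M]
    [Module R M] : Prop :=
  ∀ (N : Type v) [AddCommGroup N] [Module R N], Function.Injective (natMap R M N)

namespace UniversallyTorsionless

variable {R : Type u} [CommRing R] {M : Type v} [AddCommGroup M] [Module R M]

theorem tmul_eq_zero (h : UniversallyTorsionless R M) {N : Type*} [AddCommGroup N] [Module R N]
    [Small.{v} N] {x : M} {n : N} (hxn : ∀ w : Module.Dual R M, w x • n = 0) :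
    x ⊗ₜ[R] n = 0 := by
  let e := Shrink.linearEquiv.{v} R N
  have : x ⊗ₜ[R] e.symm n = 0 :=
    h _ <| by ext w; simp [natMap_tmul, ← map_smul, hxn]
  simpa using congr(LinearMap.lTensor M e.toLinearMap $this)

theorem mem_smul_top [Small.{v} R] (h : UniversallyTorsionless R M) {I : Ideal R} {x : M}
    (hx : ∀ w : Module.Dual R M, w x ∈ I) : x ∈ I • (⊤ : Submodule R M) := by
  have : Small.{v} (R ⧸ I) := small_of_surjective Ideal.Quotient.mk_surjective
  have : x ⊗ₜ[R] (1 : R ⧸ I) = 0 := h.tmul_eq_zero fun w => by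
    rw [Algebra.smul_def, mul_one, Ideal.Quotient.algebraMap_eq, Ideal.Quotient.eq_zero_iff_mem]
    exact hx w
  have := congr(tensorQuotEquivQuotSMul M I $this)
  rwa [← map_one (Ideal.Quotient.mk I), tensorQuotEquivQuotSMul_tmul_mk, one_smul, map_zero,
    Submodule.Quotient.mk_eq_zero] at this

theorem isTorsionFree [IsDomain R] [Small.{v} R] (h : UniversallyTorsionless R M) :
    Module.IsTorsionFree R M := by
  refine .of_smul_eq_zero fun r x hrx => or_iff_not_imp_left.mpr fun hr => ?_
  have := h.mem_smul_top (I := ⊥) fun w => by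
    simpa [hr] using congr(w $hrx)
  simpa using this

theorem exists_sum_smul_eq [Small.{v} R] (h : UniversallyTorsionless R M) (x : M) :
    ∃ (n : ℕ) (w : Fin n → Module.Dual R M) (y : Fin n → M), ∑ i, w i x • y i = x := by
  have hx := h.mem_smul_top (I := LinearMap.range (Module.Dual.eval R M x)) fun w => ⟨w, rfl⟩
  refine Submodule.smul_induction_on (p := fun m =>
    ∃ (n : ℕ) (w : Fin n → Module.Dual R M) (y : Fin n → M), ∑ i, w i x • y i = m) hx ?_ ?_
  · rintro _ ⟨w, rfl⟩ y -
    exact ⟨1, fun _ => w, fun _ => y, by simp⟩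
  · rintro _ _ ⟨n₁, w₁, y₁, rfl⟩ ⟨n₂, w₂, y₂, rfl⟩
    exact ⟨n₁ + n₂, Fin.append w₁ w₂, Fin.append y₁ y₂, by simp [Fin.sum_univ_add]⟩

theorem exists_sum_smul_eq_of_finset [Small.{v} R] (h : UniversallyTorsionless R M)
    (s : Finset M) : ∃ (n : ℕ) (w : Fin n → Module.Dual R M) (y : Fin n → M),
      ∀ x ∈ s, ∑ i, w i x • y i = x := by
  classical
  induction s using Finset.induction_on with
  | empty => exact ⟨0, finZeroElim, finZeroElim, by simp⟩
  | insert x s _ ih =>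
    obtain ⟨n₁, w₁, y₁, h₁⟩ := ih
    -- `ε` fixes `s`; precomposing the functionals for `x - ε x` with `1 - ε` makes the
    -- correction vanish on `s`
    let ε : Module.End R M := ∑ i, LinearMap.toSpanSingleton R M (y₁ i) ∘ₗ w₁ i
    have hε (m : M) : ε m = ∑ i, w₁ i m • y₁ i := by simp [ε]
    obtain ⟨n₂, w₂, y₂, h₂⟩ := h.exists_sum_smul_eq (x - ε x)
    refine ⟨n₁ + n₂, Fin.append w₁ fun j => w₂ j ∘ₗ (LinearMap.id - ε), Fin.append y₁ y₂,
      ?_⟩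
    simp only [Finset.mem_insert, forall_eq_or_imp, Fin.sum_univ_add, Fin.append_left,
      Fin.append_right, LinearMap.comp_apply, LinearMap.sub_apply, LinearMap.id_apply, ← hε]
    refine ⟨by rw [h₂, add_sub_cancel], fun x' hx' => ?_⟩
    rw [show ε x' = x' from (hε x').trans (h₁ x' hx')]
    simp

theorem exists_retract_of_fg [Small.{v} R] (h : UniversallyTorsionless R M) {L : Submodule R M}
    (hL : L.FG) : ∃ (n : ℕ) (θ : M →ₗ[R] Fin n → R) (π : (Fin n → R) →ₗ[R] M),
      ∀ x ∈ L, π (θ x) = x := by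
  obtain ⟨s, rfl⟩ := hL
  obtain ⟨n, w, y, hwy⟩ := h.exists_sum_smul_eq_of_finset s
  refine ⟨n, LinearMap.pi w, Fintype.linearCombination R y, fun x hx =>
    LinearMap.eqOn_span (f := Fintype.linearCombination R y ∘ₗ LinearMap.pi w)
      (g := LinearMap.id) (fun z hz => ?_) hx⟩
  simpa [Fintype.linearCombination_apply] using hwy z hz

theorem exists_fg_projective_isCompl_le [IsDedekindDomain R] (h : UniversallyTorsionless R M)
    {L : Submodule R M} (hL : L.FG) :
    ∃ P : Submodule R M,
      (P.FG ∧ Module.Projective R P ∧ ∃ P', IsCompl P P') ∧ L ≤ P := by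
  cases subsingleton_or_nontrivial M
  · exact ⟨⊥, ⟨Submodule.fg_bot, inferInstance, ⊤, isCompl_bot_top⟩,
      (Submodule.eq_bot_of_subsingleton (p := L)).le⟩
  have : Small.{v} R := small_of_nontrivial M
  have : Module.IsTorsionFree R M := h.isTorsionFree
  obtain ⟨n₁, θ₁, π₁, h₁⟩ := h.exists_retract_of_fg hL
  have hfg := L.fg_saturation_of_retract θ₁ π₁ h₁
  obtain ⟨n₂, θ₂, π₂, h₂⟩ := h.exists_retract_of_fg hfg
  have : Module.Finite R L.saturation := Module.Finite.iff_fg.mpr hfg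
  exact ⟨L.saturation, ⟨hfg, Module.projective_of_isTorsionFree,
    L.exists_isCompl_saturation_of_retract θ₂ π₂ h₂⟩, L.le_saturation⟩

end UniversallyTorsionless

theorem stmt14_general (R : Type u) [CommRing R] [IsDedekindDomain R]
    (M : Type v) [AddCommGroup M] [Module R M]
    (h : ∀ (N : Type v) [AddCommGroup N] [Module R N], Function.Injective (natMap R M N)) :
    DirectedOn (· ≤ ·)
      {L : Submodule R M | L.FG ∧ Module.Projective R L ∧ ∃ L', IsCompl L L'} ∧
    sSup {L : Submodule R M | L.FG ∧ Module.Projective R L ∧ ∃ L', IsCompl L L'} = ⊤ := by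
  have key {L : Submodule R M} (hL : L.FG) :=
    UniversallyTorsionless.exists_fg_projective_isCompl_le h hL
  refine ⟨fun L₁ hL₁ L₂ hL₂ => ?_, eq_top_iff.mpr fun x _ => ?_⟩
  · obtain ⟨P, hP, hle⟩ := key (hL₁.1.sup hL₂.1)
    exact ⟨P, hP, le_sup_left.trans hle, le_sup_right.trans hle⟩
  · obtain ⟨P, hP, hle⟩ := key (Submodule.fg_span_singleton x)
    exact Submodule.mem_sSup_of_mem hP (hle (Submodule.mem_span_singleton_self x))

theorem stmt14 (R : Type u) [CommRing R] [IsDomain R] [IsDedekindDomain R]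
    (M : Type v) [AddCommGroup M] [Module R M]
    (h : ∀ (N : Type v) [AddCommGroup N] [Module R N], Function.Injective (natMap R M N)) :
    DirectedOn (· ≤ ·)
      {L : Submodule R M | L.FG ∧ Module.Projective R L ∧ ∃ L', IsCompl L L'} ∧
    sSup {L : Submodule R M | L.FG ∧ Module.Projective R L ∧ ∃ L', IsCompl L L'} = ⊤ :=
  stmt14_general R M h
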